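/- Weyl superdimension formula for osp(1|2n) at λ in the root lattice: for any weight λ in Q ⊗ C, the limit as t → 0 of Ã_{λ+ρ}(tρ^∨)/Ã_ρ(tρ^∨) equals Π_{α ∈ Δ⁺_{0,short}} (α | λ+ρ)/(α | ρ), where Ã_μ = Σ_{w∈W} (-1)^{ℓ̃(w)} e^{w(μ)-ρ} and ℓ̃(w) is the modified length counting short-root reflections. In the concrete coordinates this states: for v with v_m = ρ_m + c·u_m, ρ_m = m - 1/2, the limit of the alternating Weyl sum ratio equals Π_{1≤l<m≤n} (v_m² - v_l²)/(ρ_m² - ρ_l²). -/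

import Mathlib

/-!
Both Weyl sums are exponential sums `∑ₚ aₚ e^{t cₚ}`, so their Taylor coefficients at `t = 0` are
the moments `∑ₚ aₚ cₚ^m`. Expanding the `m`-th power multinomially, the sum over sign flips kills
every exponent vector `k` with an odd entry, and the sum over permutations produces
`det (ρ_i ^ k_j)`, which kills every non-injective `k`. Distinct even exponents add up to at least
`n (n - 1)`, so all moments below that degree vanish, and in degree `n (n - 1)` only the
rearrangements of `(0, 2, …, 2n - 2)` survive: the leading coefficient is a constant times
`V(ρ²) V(μ²)`, with `V` the Vandermonde determinant. The limit of the ratio is `V(v²) / V(ρ²)`,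
the product over the short positive roots.
-/

open Filter

/-- The alternating Weyl sum `Σ_{w ∈ W} sgn₀(w) e^{t⟨w(μ), ρW⟩}` over the group `W` of
signed permutations of `{1,…,n}` (the Weyl group of `sp(2n)`), where `sgn₀(w)` is the sign
of the underlying (unsigned) permutation of `w`; parametrizing `w` by a pair `(σ, ε)` of a
permutation and a sign flip, the pairing is `⟨w(μ), ρW⟩ = Σ_j ε_j μ_j ρW_{σ(j)}`. -/
noncomputable def signedWeylSum (n : ℕ) (ρW : Fin n → ℝ) (μ : Fin n → ℝ) (t : ℝ) : ℝ :=
  ∑ σ : Equiv.Perm (Fin n), ∑ ε : Fin n → Bool,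
    ((Equiv.Perm.sign σ : ℤ) : ℝ) *
      Real.exp (t * ∑ j, (if ε j then -1 else 1) * μ j * ρW (σ j))

open Topology Finset Real

theorem tendsto_div_pow_nhdsNE_of_iteratedDeriv_eq_zero {f : ℝ → ℝ} {N : ℕ}
    (hf : ContDiff ℝ N f) (h0 : ∀ m < N, iteratedDeriv m f 0 = 0) :
    Tendsto (fun t => f t / t ^ N) (𝓝[≠] 0) (𝓝 (iteratedDeriv N f 0 / N.factorial)) := by
  set A := iteratedDeriv N f 0 / N.factorial
  have htaylor : ∀ t, taylorWithinEval f N Set.univ 0 t = A * t ^ N := by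
    intro t
    rw [taylor_within_apply, sum_range_succ, sum_eq_zero fun m hm => by
      rw [iteratedDerivWithin_univ, h0 m (mem_range.1 hm), smul_zero], iteratedDerivWithin_univ]
    simp only [zero_add, sub_zero, smul_eq_mul, A]
    ring
  have hrem := (taylor_isLittleO_univ hf (x₀ := 0)).tendsto_div_nhds_zero
  simp only [htaylor, sub_zero] at hrem
  refine (hrem.mono_left nhdsWithin_le_nhds).add_const A |>.congr' ?_ |>.trans (by rw [zero_add])
  filter_upwards [self_mem_nhdsWithin] with t (ht : t ≠ 0)
  field_simp
  ring

theorem iteratedDeriv_sum_mul_exp {ι : Type*} (s : Finset ι) (a c : ι → ℝ) (m : ℕ) :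
    iteratedDeriv m (fun t => ∑ i ∈ s, a i * exp (t * c i))
      = fun t => ∑ i ∈ s, a i * c i ^ m * exp (t * c i) := by
  induction m with
  | zero => simp
  | succ m ih =>
    ext t
    rw [iteratedDeriv_succ, ih]
    refine (HasDerivAt.fun_sum fun i _ => ?_).deriv
    exact ((hasDerivAt_mul_const (c i)).exp.const_mul (a i * c i ^ m)).congr_deriv (by ring)

theorem tendsto_sum_mul_exp_div_pow {ι : Type*} [Fintype ι] (a c : ι → ℝ) {N : ℕ}
    (h0 : ∀ m < N, ∑ i, a i * c i ^ m = 0) :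
    Tendsto (fun t => (∑ i, a i * exp (t * c i)) / t ^ N) (𝓝[≠] 0)
      (𝓝 ((∑ i, a i * c i ^ N) / N.factorial)) := by
  have hderiv : ∀ m, iteratedDeriv m (fun t => ∑ i, a i * exp (t * c i)) 0
      = ∑ i, a i * c i ^ m := fun m => by simp [iteratedDeriv_sum_mul_exp]
  rw [← hderiv]
  exact tendsto_div_pow_nhdsNE_of_iteratedDeriv_eq_zero (by fun_prop)
    fun m hm => (hderiv m).trans (h0 m hm)

theorem Finset.sum_range_card_le_sum_id (s : Finset ℕ) : ∑ i ∈ range #s, i ≤ ∑ x ∈ s, x := by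
  induction s using Finset.induction_on_max with
  | empty => simp
  | insert a s hlt ih =>
    have hcard : #s ≤ a := by simpa using card_le_card fun x hx => mem_range.2 (hlt x hx)
    rw [card_insert_of_notMem fun h => (hlt a h).false, sum_range_succ,
      sum_insert fun h => (hlt a h).false]
    omega

theorem Finset.sum_range_card_lt_sum_id {s : Finset ℕ} {a : ℕ} (ha : a ∈ s) (hcard : #s ≤ a) :
    ∑ i ∈ range #s, i < ∑ x ∈ s, x := by
  have herase := sum_range_card_le_sum_id (s.erase a)
  obtain ⟨k, hk⟩ := Nat.exists_eq_add_one.2 (card_pos.2 ⟨a, ha⟩)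
  rw [card_erase_of_mem ha, hk, Nat.add_sub_cancel] at herase
  rw [← add_sum_erase s _ ha, hk, sum_range_succ]
  omega

theorem card_image_univ_of_injective {α : Type*} [DecidableEq α] {n : ℕ} {a : Fin n → α} (ha : Function.Injective a) :
    #(univ.image a) = n := by
  rw [card_image_of_injective _ ha, card_univ, Fintype.card_fin]

theorem sum_val_le_sum_of_injective {n : ℕ} {a : Fin n → ℕ} (ha : Function.Injective a) :
    ∑ i : Fin n, (i : ℕ) ≤ ∑ j, a j := by
  have h := sum_range_card_le_sum_id (univ.image a)
  rwa [card_image_univ_of_injective ha, sum_image fun x _ y _ h => ha h,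
    ← Fin.sum_univ_eq_sum_range] at h

theorem exists_perm_of_sum_le_sum_val {n : ℕ} {a : Fin n → ℕ} (ha : Function.Injective a)
    (hsum : ∑ j, a j ≤ ∑ i : Fin n, (i : ℕ)) : ∃ τ : Equiv.Perm (Fin n), ∀ j, a j = τ j := by
  have hlt : ∀ j, a j < n := by
    intro j
    by_contra! hj
    have h := sum_range_card_lt_sum_id (mem_image_of_mem a (mem_univ j))
      (by rwa [card_image_univ_of_injective ha])
    rw [card_image_univ_of_injective ha, sum_image fun x _ y _ h => ha h,
      ← Fin.sum_univ_eq_sum_range] at h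
    omega
  have hinj : Function.Injective fun j => (⟨a j, hlt j⟩ : Fin n) :=
    fun x y h => ha (congrArg Fin.val h)
  exact ⟨Equiv.ofBijective _ hinj.bijective_of_finite, fun j => rfl⟩

/-- The `m`-th derivative of `signedWeylSum n ρ μ` at `0`. -/
noncomputable def weylMoment (n : ℕ) (ρ μ : Fin n → ℝ) (m : ℕ) : ℝ :=
  ∑ σ : Equiv.Perm (Fin n), ∑ ε : Fin n → Bool,
    ((Equiv.Perm.sign σ : ℤ) : ℝ) * (∑ j, (if ε j then -1 else 1) * μ j * ρ (σ j)) ^ m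

theorem sum_signs_prod_pow {n : ℕ} (k : Fin n → ℕ) :
    ∑ ε : Fin n → Bool, ∏ j, (if ε j then (-1 : ℝ) else 1) ^ k j = ∏ j, ((-1) ^ k j + 1) := by
  rw [← Fintype.prod_sum fun j (b : Bool) => (if b then (-1 : ℝ) else 1) ^ k j]
  simp [add_comm]

theorem sum_sign_mul_prod_pow_eq_det {n : ℕ} (ρ : Fin n → ℝ) (k : Fin n → ℕ) :
    ∑ σ : Equiv.Perm (Fin n), ((Equiv.Perm.sign σ : ℤ) : ℝ) * ∏ j, ρ (σ j) ^ k j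
      = (Matrix.of fun i j => ρ i ^ k j).det := by
  simp [Matrix.det_apply, Units.smul_def]

theorem weylMoment_eq_sum_piAntidiag (n : ℕ) (ρ μ : Fin n → ℝ) (m : ℕ) :
    weylMoment n ρ μ m = ∑ k ∈ univ.piAntidiag m, (Nat.multinomial univ k : ℝ) *
      (∏ j, μ j ^ k j) * ((∏ j, ((-1) ^ k j + 1)) * (Matrix.of fun i j => ρ i ^ k j).det) := by
  simp_rw [← sum_signs_prod_pow, ← sum_sign_mul_prod_pow_eq_det, weylMoment,
    sum_pow_eq_sum_piAntidiag, mul_pow, prod_mul_distrib]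
  simp only [mul_sum, sum_mul]
  refine (sum_congr rfl fun σ _ => sum_comm).trans <| sum_comm.trans <|
    sum_congr rfl fun k _ => sum_congr rfl fun σ _ => sum_congr rfl fun ε _ => by ring

theorem two_mul_sum_val (n : ℕ) : 2 * ∑ i : Fin n, (i : ℕ) = n * (n - 1) := by
  rw [Fin.sum_univ_eq_sum_range (fun i => i), mul_comm, sum_range_id_mul_two]

theorem prod_neg_one_pow_add_one_mul_det_eq_zero {n : ℕ} (ρ : Fin n → ℝ) {k : Fin n → ℕ}
    (h : ¬((∀ j, Even (k j)) ∧ Function.Injective k)) :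
    (∏ j, ((-1 : ℝ) ^ k j + 1)) * (Matrix.of fun i j => ρ i ^ k j).det = 0 := by
  rw [not_and_or, not_forall, Function.not_injective_iff] at h
  rcases h with ⟨j, hodd⟩ | ⟨j₁, j₂, hk, hne⟩
  · have hj : (-1 : ℝ) ^ k j + 1 = 0 := by
      rw [(Nat.not_even_iff_odd.1 hodd).neg_one_pow, neg_add_cancel]
    rw [prod_eq_zero (mem_univ j) hj, zero_mul]
  · rw [Matrix.det_zero_of_column_eq hne fun i => by simp [hk], mul_zero]

theorem weylMoment_eq_zero_of_lt {n : ℕ} (ρ μ : Fin n → ℝ) {m : ℕ} (hm : m < n * (n - 1)) :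
    weylMoment n ρ μ m = 0 := by
  rw [weylMoment_eq_sum_piAntidiag]
  refine sum_eq_zero fun k hk => ?_
  suffices h : ¬((∀ j, Even (k j)) ∧ Function.Injective k) by
    rw [prod_neg_one_pow_add_one_mul_det_eq_zero ρ h, mul_zero]
  rintro ⟨hev, hinj⟩
  obtain ⟨a, rfl⟩ : ∃ a : Fin n → ℕ, k = fun j => 2 * a j :=
    ⟨fun j => k j / 2, funext fun j => (Nat.two_mul_div_two_of_even (hev j)).symm⟩
  have hle := sum_val_le_sum_of_injective (hinj.of_comp (f := (2 * ·)))
  rw [mem_piAntidiag, ← mul_sum] at hk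
  have := two_mul_sum_val n
  omega

theorem det_of_pow_two_mul_perm {n : ℕ} (ρ : Fin n → ℝ) (τ : Equiv.Perm (Fin n)) :
    (Matrix.of fun i j => ρ i ^ (2 * (τ j : ℕ))).det
      = ((Equiv.Perm.sign τ : ℤ) : ℝ) * (Matrix.vandermonde fun i => ρ i ^ 2).det := by
  rw [← Matrix.det_permute']
  congr 1
  ext i j
  simp [Matrix.vandermonde_apply, pow_mul]

theorem sum_sign_mul_prod_pow_perm_eq_det_vandermonde {n : ℕ} (x : Fin n → ℝ) :
    ∑ τ : Equiv.Perm (Fin n), ((Equiv.Perm.sign τ : ℤ) : ℝ) * ∏ j, x j ^ (τ j : ℕ)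
      = (Matrix.vandermonde x).det := by
  rw [← Matrix.det_transpose, Matrix.det_apply]
  simp [Units.smul_def, Matrix.vandermonde_apply]

theorem multinomial_two_mul_perm {n : ℕ} (τ : Equiv.Perm (Fin n)) :
    Nat.multinomial univ (fun j => 2 * (τ j : ℕ))
      = Nat.multinomial univ (fun j : Fin n => 2 * (j : ℕ)) := by
  simp only [Nat.multinomial, Equiv.sum_comp τ (fun j : Fin n => 2 * (j : ℕ)),
    Equiv.prod_comp τ (fun j : Fin n => (2 * (j : ℕ)).factorial)]

theorem weylMoment_mul_sub_one (n : ℕ) (ρ μ : Fin n → ℝ) :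
    weylMoment n ρ μ (n * (n - 1)) = Nat.multinomial univ (fun j : Fin n => 2 * (j : ℕ)) * 2 ^ n *
      (Matrix.vandermonde fun i => ρ i ^ 2).det * (Matrix.vandermonde fun i => μ i ^ 2).det := by
  have hsum : ∀ τ : Equiv.Perm (Fin n), ∑ j, 2 * (τ j : ℕ) = n * (n - 1) := fun τ => by
    rw [← mul_sum, Equiv.sum_comp τ (fun j : Fin n => (j : ℕ)), two_mul_sum_val]
  rw [weylMoment_eq_sum_piAntidiag,
    ← sum_sign_mul_prod_pow_perm_eq_det_vandermonde fun i => μ i ^ 2, mul_sum]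
  symm
  refine sum_of_injOn (fun (τ : Equiv.Perm (Fin n)) j => 2 * (τ j : ℕ)) ?_ ?_ ?_ ?_
  · intro τ _ τ' _ h
    ext j
    have := congrFun h j
    simp only at this
    omega
  · intro τ _
    simp [mem_piAntidiag, hsum τ]
  · intro k hk hnot
    suffices h : ¬((∀ j, Even (k j)) ∧ Function.Injective k) by
      rw [prod_neg_one_pow_add_one_mul_det_eq_zero ρ h, mul_zero]
    rintro ⟨hev, hinj⟩
    obtain ⟨a, rfl⟩ : ∃ a : Fin n → ℕ, k = fun j => 2 * a j :=
      ⟨fun j => k j / 2, funext fun j => (Nat.two_mul_div_two_of_even (hev j)).symm⟩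
    rw [mem_piAntidiag, ← mul_sum, ← two_mul_sum_val] at hk
    obtain ⟨τ, hτ⟩ := exists_perm_of_sum_le_sum_val (hinj.of_comp (f := (2 * ·))) (by omega)
    exact hnot ⟨τ, by simp, funext fun j => by simp [hτ]⟩
  · intro τ _
    have hev : ∀ j, (-1 : ℝ) ^ (2 * (τ j : ℕ)) + 1 = 2 := fun j => by
      rw [pow_mul, neg_one_sq, one_pow, one_add_one_eq_two]
    simp only [hev, prod_const, card_univ, Fintype.card_fin, multinomial_two_mul_perm,
      det_of_pow_two_mul_perm, ← pow_mul]
    ring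

theorem prod_filter_lt_eq_prod_prod_Ioi {M : Type*} [CommMonoid M] {n : ℕ} (f : Fin n → Fin n → M) :
    ∏ p ∈ univ.filter (fun p : Fin n × Fin n => p.1 < p.2), f p.1 p.2
      = ∏ i, ∏ j ∈ Ioi i, f i j := by
  rw [prod_filter, Fintype.prod_prod_type]
  simp [← filter_lt_eq_Ioi, prod_filter]

theorem det_vandermonde_div_det_vandermonde {K : Type*} [Field K] {n : ℕ} (x y : Fin n → K) :
    (Matrix.vandermonde x).det / (Matrix.vandermonde y).det
      = ∏ p ∈ univ.filter (fun p : Fin n × Fin n => p.1 < p.2),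
          (x p.2 - x p.1) / (y p.2 - y p.1) := by
  rw [prod_filter_lt_eq_prod_prod_Ioi (fun i j => (x j - x i) / (y j - y i)),
    Matrix.det_vandermonde, Matrix.det_vandermonde]
  simp only [prod_div_distrib]

theorem tendsto_signedWeylSum_div_pow (n : ℕ) (ρ μ : Fin n → ℝ) :
    Tendsto (fun t => signedWeylSum n ρ μ t / t ^ (n * (n - 1))) (𝓝[≠] 0)
      (𝓝 (weylMoment n ρ μ (n * (n - 1)) / (n * (n - 1)).factorial)) := by
  have hmoment : ∀ m, weylMoment n ρ μ m = ∑ p : Equiv.Perm (Fin n) × (Fin n → Bool),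
      ((Equiv.Perm.sign p.1 : ℤ) : ℝ) * (∑ j, (if p.2 j then -1 else 1) * μ j * ρ (p.1 j)) ^ m :=
    fun m => by rw [weylMoment, Fintype.sum_prod_type]
  simp only [signedWeylSum, ← Fintype.sum_prod_type', hmoment]
  exact tendsto_sum_mul_exp_div_pow _ _ fun m hm =>
    (hmoment m).symm.trans (weylMoment_eq_zero_of_lt ρ μ hm)

theorem tendsto_signedWeylSum_div_signedWeylSum {n : ℕ} {ρ : Fin n → ℝ}
    (hρ : Function.Injective fun i => ρ i ^ 2) (μ : Fin n → ℝ) :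
    Tendsto (fun t => signedWeylSum n ρ μ t / signedWeylSum n ρ ρ t) (𝓝[≠] 0)
      (𝓝 ((Matrix.vandermonde fun i => μ i ^ 2).det /
        (Matrix.vandermonde fun i => ρ i ^ 2).det)) := by
  have hV := Matrix.det_vandermonde_ne_zero_iff.2 hρ
  have hM := Nat.multinomial_pos univ (fun j : Fin n => 2 * (j : ℕ))
  have hlim := (tendsto_signedWeylSum_div_pow n ρ μ).div (tendsto_signedWeylSum_div_pow n ρ ρ)
    (by rw [weylMoment_mul_sub_one]; positivity)
  rw [weylMoment_mul_sub_one, weylMoment_mul_sub_one] at hlim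
  convert hlim.congr' ?_ using 2
  · field_simp
  · filter_upwards [self_mem_nhdsWithin] with t (ht : t ≠ 0)
    exact div_div_div_cancel_right₀ (pow_ne_zero _ ht) _ _

theorem weyl_superdimension_limit_general (n : ℕ)
    (ρW : Fin n → ℝ) (hρ : ∀ m, ρW m = (m : ℕ) + 1 / 2)
    (v : Fin n → ℝ) :
    Tendsto (fun t : ℝ => signedWeylSum n ρW v t / signedWeylSum n ρW ρW t)
      (nhdsWithin 0 {t : ℝ | t ≠ 0})
      (nhds (∏ p ∈ Finset.univ.filter (fun p : Fin n × Fin n => p.1 < p.2),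
        ((v p.2) ^ 2 - (v p.1) ^ 2) / ((ρW p.2) ^ 2 - (ρW p.1) ^ 2))) := by
  have hρ_sq : Function.Injective fun i => ρW i ^ 2 := by
    intro i j h
    have hpos : ∀ m, 0 ≤ ρW m := fun m => by rw [hρ]; positivity
    rw [sq_eq_sq₀ (hpos i) (hpos j), hρ, hρ, add_left_inj, Nat.cast_inj] at h
    exact Fin.ext h
  rw [← det_vandermonde_div_det_vandermonde (fun i => v i ^ 2) (fun i => ρW i ^ 2)]
  exact tendsto_signedWeylSum_div_signedWeylSum hρ_sq v

/-- Weyl superdimension formula for `osp(1|2n)` in concrete coordinates,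
cf. Eq. (A.4) of the paper: with `ρ_m = m - 1/2` and `v_m = ρ_m + c·u_m`, `c = 2(n+k)+1`,
`u ∈ ℤⁿ`, the ratio `Ã_{λ+ρ}(tρ^∨)/Ã_ρ(tρ^∨)` of alternating Weyl sums tends, as `t → 0`,
to the product over short positive even roots
`∏_{α ∈ Δ⁺_{0,short}} (α|λ+ρ)/(α|ρ) = ∏_{1≤l<m≤n} (v_m² - v_l²)/(ρ_m² - ρ_l²)`. -/
theorem weyl_superdimension_limit (n k : ℕ) (hn : 0 < n) (hk : 0 < k)
    (c : ℝ) (hc : c = 2 * (n + k) + 1)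
    (ρW : Fin n → ℝ) (hρ : ∀ m, ρW m = (m : ℕ) + 1 / 2)
    (u : Fin n → ℤ)
    (v : Fin n → ℝ) (hv : ∀ m, v m = ρW m + c * u m) :
    Tendsto (fun t : ℝ => signedWeylSum n ρW v t / signedWeylSum n ρW ρW t)
      (nhdsWithin 0 {t : ℝ | t ≠ 0})
      (nhds (∏ p ∈ Finset.univ.filter (fun p : Fin n × Fin n => p.1 < p.2),
        ((v p.2) ^ 2 - (v p.1) ^ 2) / ((ρW p.2) ^ 2 - (ρW p.1) ^ 2))) :=
  weyl_superdimension_limit_general n ρW hρ v
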